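/- On n qubits, the expected output of magic state rounding damps every Pauli-string expectation by 1/3 per non-identity tensor factor: for every n ∈ ℕ, every matrix ρ indexed by (Fin n → Fin 2), and every Pauli string P : Fin n → Fin 4, it holds that tr(T_P · R(ρ)) = (1/3)^{w(P)} · tr(T_P · ρ), where w(P) = |{q : P(q) ≠ 0}| is the weight of the string. -/

import Mathlib

open Matrix

/-- The Pauli `X` matrix. -/
noncomputable def PX : Matrix (Fin 2) (Fin 2) ℂ := !![0, 1; 1, 0]

/-- The Pauli `Y` matrix. -/
noncomputable def PY : Matrix (Fin 2) (Fin 2) ℂ := !![0, -Complex.I; Complex.I, 0]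

/-- The Pauli `Z` matrix. -/
noncomputable def PZ : Matrix (Fin 2) (Fin 2) ℂ := !![1, 0; 0, -1]

/-- The four single-qubit Pauli matrices `p₀ = I, p₁ = X, p₂ = Y, p₃ = Z`. -/
noncomputable def pauli : Fin 4 → Matrix (Fin 2) (Fin 2) ℂ :=
  ![(1 : Matrix (Fin 2) (Fin 2) ℂ), PX, PY, PZ]

/-- The single-qubit magic state `μ_u` for `u ∈ {−1,1}³`. -/
noncomputable def magic (u : Fin 3 → ℝ) : Matrix (Fin 2) (Fin 2) ℂ :=
  (1 / 2 : ℂ) • ((1 : Matrix (Fin 2) (Fin 2) ℂ) +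
    (1 / (Real.sqrt 3 : ℂ)) • ((u 0 : ℂ) • PX + (u 1 : ℂ) • PY + (u 2 : ℂ) • PZ))

/-- `±1`-valued sign of a Boolean, used to enumerate `{−1,1}³` by `Fin 3 → Bool`. -/
noncomputable def bsign (b : Bool) : ℝ := if b then 1 else -1

/-- The `n`-qubit Pauli-string operator `T_P` of a string `P : Fin n → Fin 4`. -/
noncomputable def pauliString (n : ℕ) (P : Fin n → Fin 4) :
    Matrix (Fin n → Fin 2) (Fin n → Fin 2) ℂ :=
  Matrix.of fun x y => ∏ q, pauli (P q) (x q) (y q)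

/-- The `n`-qubit tensor product of magic states `M_u` for `u : Fin n → {−1,1}³`. -/
noncomputable def magicProd (n : ℕ) (u : Fin n → Fin 3 → Bool) :
    Matrix (Fin n → Fin 2) (Fin n → Fin 2) ℂ :=
  Matrix.of fun x y => ∏ q, magic (fun i => bsign (u q i)) (x q) (y q)

/-- The expected magic-state-rounding channel on `n` qubits:
`R(ρ) = (1/4ⁿ)·Σ_u tr(M_u·ρ)·M_u`. -/
noncomputable def roundCh (n : ℕ) (ρ : Matrix (Fin n → Fin 2) (Fin n → Fin 2) ℂ) :
    Matrix (Fin n → Fin 2) (Fin n → Fin 2) ℂ :=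
  (1 / 4 ^ n : ℂ) • ∑ u : Fin n → Fin 3 → Bool, (magicProd n u * ρ).trace • magicProd n u

/-!
Both `T_P` and `M_u` are Kronecker products over the qubits, so `tr(T_P · M_u)` factorizes and
`Σ_u tr(T_P · M_u) · M_u` is the Kronecker product of the single-qubit sums
`Σ_v tr(p_k · μ_v) · μ_v`. Because the eight sign vectors `v ∈ {−1,1}³` satisfy
`Σ_v v_i = 0` and `Σ_v v_i v_j = 8 δ_ij`, that sum is `4 · p_k` for `k = 0` and `(4/3) · p_k`
otherwise. Moving the sum across the trace pairing,
`tr(T_P · R(ρ)) = 4⁻ⁿ · tr((Σ_u tr(T_P · M_u) · M_u) · ρ) = 3^{-w(P)} · tr(T_P · ρ)`.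
-/

namespace Matrix

variable {ι m n p κ R : Type*} [Fintype ι] [CommSemiring R]

def piKron (A : ι → Matrix m n R) : Matrix (ι → m) (ι → n) R :=
  of fun x y => ∏ q, A q (x q) (y q)

theorem piKron_apply (A : ι → Matrix m n R) (x : ι → m) (y : ι → n) :
    piKron A x y = ∏ q, A q (x q) (y q) := rfl

theorem piKron_smul (c : ι → R) (A : ι → Matrix m n R) :
    piKron (fun q => c q • A q) = (∏ q, c q) • piKron A := by
  ext x y
  simp only [piKron_apply, smul_apply, smul_eq_mul, Finset.prod_mul_distrib]

theorem trace_mul_sum_trace_mul_smul [Fintype m] (M : ι → Matrix m m R) (A B : Matrix m m R) :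
    (A * ∑ u, (M u * B).trace • M u).trace = ((∑ u, (A * M u).trace • M u) * B).trace := by
  simp only [Matrix.mul_sum, Matrix.sum_mul, trace_sum, Matrix.mul_smul, Matrix.smul_mul,
    trace_smul, smul_eq_mul, mul_comm]

variable [DecidableEq ι]

theorem piKron_mul_piKron [Fintype n] (A : ι → Matrix m n R) (B : ι → Matrix n p R) :
    piKron A * piKron B = piKron (fun q => A q * B q) := by
  ext x y
  simp only [mul_apply, piKron_apply, Fintype.prod_sum, Finset.prod_mul_distrib]

theorem trace_piKron [Fintype m] (A : ι → Matrix m m R) :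
    (piKron A).trace = ∏ q, (A q).trace := by
  simp only [trace, diag, piKron_apply, Fintype.prod_sum]

theorem sum_piKron [Fintype κ] (A : ι → κ → Matrix m n R) :
    ∑ u : ι → κ, piKron (fun q => A q (u q)) = piKron (fun q => ∑ v, A q v) := by
  ext x y
  simp only [sum_apply, piKron_apply, Fintype.prod_sum]

end Matrix

theorem Fintype.sum_fin_three_arrow {M α : Type*} [AddCommMonoid M] [Fintype α]
    (f : (Fin 3 → α) → M) : ∑ v, f v = ∑ a, ∑ b, ∑ c, f ![a, b, c] := by
  simp only [← (Fin.consEquiv _).sum_comp, Fintype.sum_prod_type, Fintype.sum_unique]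
  rfl

theorem magic_eq_half_smul (u : Fin 3 → ℝ) :
    magic u = (1 / 2 : ℂ) • !![1 + (u 2 : ℂ) / Real.sqrt 3, (u 0 - Complex.I * u 1) / Real.sqrt 3;
      (u 0 + Complex.I * u 1) / Real.sqrt 3, 1 - (u 2 : ℂ) / Real.sqrt 3] := by
  ext a b
  fin_cases a <;> fin_cases b <;> simp [magic, PX, PY, PZ] <;> ring

theorem trace_pauli_mul_magic (k : Fin 4) (u : Fin 3 → ℝ) :
    (pauli k * magic u).trace =
      ![1, (u 0 : ℂ) / Real.sqrt 3, (u 1 : ℂ) / Real.sqrt 3, (u 2 : ℂ) / Real.sqrt 3] k := by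
  fin_cases k <;> simp [pauli, magic_eq_half_smul, PX, PY, PZ, trace_fin_two] <;> ring_nf
  simp

theorem sum_trace_pauli_mul_magic_smul_magic (k : Fin 4) :
    ∑ v : Fin 3 → Bool, (pauli k * magic fun i => bsign (v i)).trace • magic (fun i => bsign (v i))
      = (4 * if k = 0 then 1 else 1 / 3 : ℂ) • pauli k := by
  have h3 : (Real.sqrt 3 : ℂ) ^ 2 = 3 := by norm_cast; simp
  ext a b
  simp only [trace_pauli_mul_magic]
  simp only [magic_eq_half_smul, Matrix.sum_apply, Matrix.smul_apply, Fintype.sum_fin_three_arrow,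
    Fintype.sum_bool, bsign]
  fin_cases k <;> fin_cases a <;> fin_cases b <;> simp [pauli, PX, PY, PZ] <;> field_simp <;>
    ring_nf <;> simp only [h3] <;> ring

theorem pauliString_eq_piKron (n : ℕ) (P : Fin n → Fin 4) :
    pauliString n P = piKron fun q => pauli (P q) := rfl

theorem magicProd_eq_piKron (n : ℕ) (u : Fin n → Fin 3 → Bool) :
    magicProd n u = piKron fun q => magic fun i => bsign (u q i) := rfl

theorem prod_four_mul_ite_eq_pow_mul_pow {ι : Type*} [Fintype ι] (P : ι → Fin 4) :
    ∏ q, (4 * if P q = 0 then 1 else 1 / 3 : ℂ) =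
      4 ^ Fintype.card ι * (1 / 3) ^ (Finset.univ.filter (fun q => P q ≠ 0)).card := by
  rw [Finset.prod_mul_distrib, Finset.prod_const, Finset.card_univ, Finset.prod_ite,
    Finset.prod_const_one, Finset.prod_const, one_mul]

theorem sum_trace_pauliString_mul_magicProd_smul (n : ℕ) (P : Fin n → Fin 4) :
    ∑ u, (pauliString n P * magicProd n u).trace • magicProd n u =
      ((4 : ℂ) ^ n * (1 / 3) ^ (Finset.univ.filter (fun q => P q ≠ 0)).card) •
        pauliString n P := by
  let μ : (Fin 3 → Bool) → Matrix (Fin 2) (Fin 2) ℂ := fun v => magic fun i => bsign (v i)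
  calc ∑ u, (pauliString n P * magicProd n u).trace • magicProd n u
      = ∑ u : Fin n → Fin 3 → Bool,
          piKron fun q => (pauli (P q) * μ (u q)).trace • μ (u q) := by
        simp only [pauliString_eq_piKron, magicProd_eq_piKron, piKron_mul_piKron, trace_piKron,
          piKron_smul]
        rfl
    _ = piKron fun q => ∑ v, (pauli (P q) * μ v).trace • μ v :=
        sum_piKron fun q v => (pauli (P q) * μ v).trace • μ v
    _ = piKron fun q => (4 * if P q = 0 then 1 else 1 / 3 : ℂ) • pauli (P q) := by
        simp only [μ, sum_trace_pauli_mul_magic_smul_magic]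
    _ = _ := by
        rw [piKron_smul, prod_four_mul_ite_eq_pow_mul_pow, Fintype.card_fin, pauliString_eq_piKron]

theorem rounding_damps_pauli_strings (n : ℕ)
    (ρ : Matrix (Fin n → Fin 2) (Fin n → Fin 2) ℂ) (P : Fin n → Fin 4) :
    (pauliString n P * roundCh n ρ).trace =
      (1 / 3 : ℂ) ^ (Finset.univ.filter (fun q => P q ≠ 0)).card *
        (pauliString n P * ρ).trace := by
  rw [roundCh, Matrix.mul_smul, trace_smul, trace_mul_sum_trace_mul_smul,
    sum_trace_pauliString_mul_magicProd_smul, Matrix.smul_mul, trace_smul, smul_eq_mul,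
    smul_eq_mul]
  field_simp
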